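/- Let n >= 1 and let A be a subset of A_{2n} such that there exist distinct p, q in {1,...,2n} with #{U in A : k_p = q} != #A/(2n-1). Then with a = (e_p + e_q)/sqrt(2), (#A/(2n-1)) * <a, e_p><a, e_q> + sum_{U in A} <U(a), e_p><U(a), e_q> = (1/2)(#A/(2n-1) - #{U in A : k_p = q}) != 0; hence {U(a) : U in A} is not a tight frame for T_a S^{2n-1} with frame constant #A/(2n-1). -/

import Mathlib

open Finset RealInnerProductSpace

/-- The admissibility condition defining the set `A_{2n}`. -/
def Adm (n : ℕ) (U : (Fin (2*n) → ℤˣ) × (Fin (2*n) → Fin (2*n))) : Prop :=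
  (∀ i, U.1 i = - U.1 (U.2 i)) ∧ (∀ i, U.2 (U.2 i) = i)

/-- A subset `A ⊆ A_{2n}` is balanced. -/
def IsBalanced (n : ℕ) (A : Finset ((Fin (2*n) → ℤˣ) × (Fin (2*n) → Fin (2*n)))) : Prop :=
  (∀ p q : Fin (2*n), p ≠ q →
    ((A.filter (fun U => U.2 p = q)).card : ℝ) = A.card / (2*(n:ℝ) - 1)) ∧
  (∀ p q r s : Fin (2*n), p ≠ q → p ≠ r → p ≠ s → q ≠ r → q ≠ s → r ≠ s →
    (A.filter (fun U => U.1 p * U.1 q = -1 ∧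
        (U.2 r = p ∧ U.2 s = q ∨ U.2 r = q ∧ U.2 s = p))).card =
    (A.filter (fun U => U.1 p * U.1 q = 1 ∧
        (U.2 r = p ∧ U.2 s = q ∨ U.2 r = q ∧ U.2 s = p))).card)

/-- The operator `U_{(ε,k)} : ℝ^{2n} → ℝ^{2n}`, `a ↦ (ε_{k_i} a_{k_i})_i`. -/
def Uact (n : ℕ) (U : (Fin (2*n) → ℤˣ) × (Fin (2*n) → Fin (2*n)))
    (a : EuclideanSpace ℝ (Fin (2*n))) : EuclideanSpace ℝ (Fin (2*n)) :=
  WithLp.toLp 2 (fun i => ((U.1 (U.2 i) : ℤ) : ℝ) * a (U.2 i))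

/-! For admissible `U = (ε, k)` the involution `k` has no fixed point, since `ε i = -ε (k i)`.
Hence for `a = (e_p + e_q)/√2` the vector `U a` vanishes at `p` and `q` unless `k p = q`, and then
its `p`- and `q`-coordinates are `±1/√2` with opposite signs. So `(U a)_q = -(U a)_p` always, and
the products `(U a)_p (U a)_q` sum to `-M/2` with `M = #{U ∈ A | k p = q}`. Testing the frame
identity on `e_p - e_q ⊥ a` at the coordinate `q` gives `-1 = -M/c`, which forces `M = c`. -/

section PairUnitVector

variable {ι : Type*} [DecidableEq ι] {p q : ι}

noncomputable def pairUnitVector (p q : ι) : EuclideanSpace ℝ ι :=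
  (√2)⁻¹ • (EuclideanSpace.single p 1 + EuclideanSpace.single q 1)

lemma pairUnitVector_apply_left (hpq : p ≠ q) : pairUnitVector p q p = (√2)⁻¹ := by
  simp [pairUnitVector, hpq]

lemma pairUnitVector_apply_right (hpq : p ≠ q) : pairUnitVector p q q = (√2)⁻¹ := by
  simp [pairUnitVector, hpq.symm]

lemma pairUnitVector_apply_of_ne {j : ι} (hp : j ≠ p) (hq : j ≠ q) :
    pairUnitVector p q j = 0 := by
  simp [pairUnitVector, hp, hq]

lemma pairUnitVector_apply_left_mul_right (hpq : p ≠ q) :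
    pairUnitVector p q p * pairUnitVector p q q = 1/2 := by
  rw [pairUnitVector_apply_left hpq, pairUnitVector_apply_right hpq,
    TsirelsonInequality.sqrt_two_inv_mul_self, one_div]

end PairUnitVector

section Uact

variable {n : ℕ} {U : (Fin (2*n) → ℤˣ) × (Fin (2*n) → Fin (2*n))} {p q : Fin (2*n)}

lemma Uact_apply (a : EuclideanSpace ℝ (Fin (2*n))) (i : Fin (2*n)) :
    Uact n U a i = ((U.1 (U.2 i) : ℤ) : ℝ) * a (U.2 i) := rfl

lemma Adm.snd_apply_ne (hU : Adm n U) (i : Fin (2*n)) : U.2 i ≠ i := fun h =>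
  units_ne_neg_self (U.1 i) (by simpa [h] using hU.1 i)

lemma Adm.Uact_pairUnitVector_of_snd_ne (hU : Adm n U) (h : U.2 p ≠ q) :
    Uact n U (pairUnitVector p q) p = 0 ∧ Uact n U (pairUnitVector p q) q = 0 := by
  have hqp : U.2 q ≠ p := fun h' => h (by rw [← h', hU.2])
  simp only [Uact_apply, pairUnitVector_apply_of_ne (hU.snd_apply_ne p) h,
    pairUnitVector_apply_of_ne hqp (hU.snd_apply_ne q), mul_zero, and_self]

lemma Adm.Uact_pairUnitVector_of_snd_eq (hU : Adm n U) (hpq : p ≠ q) (h : U.2 p = q) :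
    Uact n U (pairUnitVector p q) p = ((U.1 q : ℤ) : ℝ) * (√2)⁻¹ ∧
      Uact n U (pairUnitVector p q) q = -(((U.1 q : ℤ) : ℝ) * (√2)⁻¹) := by
  have hqp : U.2 q = p := by rw [← h, hU.2]
  have hsign : U.1 p = -U.1 q := by rw [hU.1 p, h]
  simp [Uact_apply, h, hqp, hsign, pairUnitVector_apply_left hpq, pairUnitVector_apply_right hpq]

lemma Adm.Uact_pairUnitVector_apply_right (hU : Adm n U) (hpq : p ≠ q) :
    Uact n U (pairUnitVector p q) q = -Uact n U (pairUnitVector p q) p := by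
  by_cases h : U.2 p = q
  · obtain ⟨hp, hq⟩ := hU.Uact_pairUnitVector_of_snd_eq hpq h
    rw [hp, hq]
  · obtain ⟨hp, hq⟩ := hU.Uact_pairUnitVector_of_snd_ne h
    rw [hp, hq, neg_zero]

lemma Adm.Uact_pairUnitVector_apply_left_mul_right (hU : Adm n U) (hpq : p ≠ q) :
    Uact n U (pairUnitVector p q) p * Uact n U (pairUnitVector p q) q =
      if U.2 p = q then -(1/2) else 0 := by
  split_ifs with h
  · obtain ⟨hp, hq⟩ := hU.Uact_pairUnitVector_of_snd_eq hpq h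
    have hε : ((U.1 q : ℤ) : ℝ) * ((U.1 q : ℤ) : ℝ) = 1 := by
      exact_mod_cast Int.isUnit_mul_self (U.1 q).isUnit
    rw [hp, hq]
    linear_combination (-(1/2 : ℝ)) * hε -
      ((U.1 q : ℤ) : ℝ) * ((U.1 q : ℤ) : ℝ) * TsirelsonInequality.sqrt_two_inv_mul_self
  · rw [(hU.Uact_pairUnitVector_of_snd_ne h).1, zero_mul]

lemma sum_Uact_pairUnitVector_apply_left_mul_right
    {A : Finset ((Fin (2*n) → ℤˣ) × (Fin (2*n) → Fin (2*n)))} (hA : ∀ U ∈ A, Adm n U)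
    (hpq : p ≠ q) :
    ∑ U ∈ A, Uact n U (pairUnitVector p q) p * Uact n U (pairUnitVector p q) q =
      -(1/2) * (A.filter (fun U => U.2 p = q)).card := by
  rw [sum_congr rfl fun U hU => (hA U hU).Uact_pairUnitVector_apply_left_mul_right hpq,
    sum_ite, sum_const_zero, add_zero, sum_const, nsmul_eq_mul]
  exact mul_comm _ _

lemma mul_inner_add_sum_inner_Uact_pairUnitVector
    {A : Finset ((Fin (2*n) → ℤˣ) × (Fin (2*n) → Fin (2*n)))} (hA : ∀ U ∈ A, Adm n U)
    (hpq : p ≠ q) (c : ℝ) :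
    c * (⟪pairUnitVector p q, EuclideanSpace.single p (1:ℝ)⟫ *
        ⟪pairUnitVector p q, EuclideanSpace.single q (1:ℝ)⟫) +
      ∑ U ∈ A, ⟪Uact n U (pairUnitVector p q), EuclideanSpace.single p (1:ℝ)⟫ *
        ⟪Uact n U (pairUnitVector p q), EuclideanSpace.single q (1:ℝ)⟫ =
      (1/2) * (c - (A.filter (fun U => U.2 p = q)).card) := by
  simp only [EuclideanSpace.inner_single_right, one_mul, conj_trivial,
    pairUnitVector_apply_left_mul_right hpq, sum_Uact_pairUnitVector_apply_left_mul_right hA hpq]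
  ring

lemma not_forall_inner_pairUnitVector_eq_zero_imp_eq_frame
    {A : Finset ((Fin (2*n) → ℤˣ) × (Fin (2*n) → Fin (2*n)))} (hA : ∀ U ∈ A, Adm n U)
    (hpq : p ≠ q) {c : ℝ} (hc : ((A.filter (fun U => U.2 p = q)).card : ℝ) ≠ c) :
    ¬ ∀ x : EuclideanSpace ℝ (Fin (2*n)), ⟪x, pairUnitVector p q⟫ = 0 →
      x = c⁻¹ • ∑ U ∈ A, ⟪x, Uact n U (pairUnitVector p q)⟫ • Uact n U (pairUnitVector p q) := by
  intro hframe
  set a := pairUnitVector p q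
  set x : EuclideanSpace ℝ (Fin (2*n)) := EuclideanSpace.single p 1 - EuclideanSpace.single q 1
  have hxa : ⟪x, a⟫ = 0 := by
    simp [x, a, inner_sub_left, EuclideanSpace.inner_single_left, pairUnitVector_apply_left hpq,
      pairUnitVector_apply_right hpq]
  have hxU : ∀ U ∈ A, ⟪x, Uact n U a⟫ = 2 * Uact n U a p := by
    intro U hU
    simp only [x, inner_sub_left, EuclideanSpace.inner_single_left, Real.ringHom_apply, one_mul]
    rw [(hA U hU).Uact_pairUnitVector_apply_right hpq]
    ring
  have hxq : x q = -1 := by simp [x, hpq]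
  clear_value x
  have hq := congrArg (fun y => y q) (hframe x hxa)
  simp only [hxq, PiLp.smul_apply, WithLp.ofLp_sum, Finset.sum_apply, smul_eq_mul] at hq
  rw [sum_congr rfl fun U hU => by rw [hxU U hU, mul_assoc], ← mul_sum,
    sum_Uact_pairUnitVector_apply_left_mul_right hA hpq] at hq
  have hc0 : c ≠ 0 := by
    rintro rfl
    norm_num at hq
  field_simp at hq
  exact hc (by linarith)

end Uact

theorem unbalanced_i_not_tight_frame_general (n : ℕ)
    (A : Finset ((Fin (2*n) → ℤˣ) × (Fin (2*n) → Fin (2*n))))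
    (hA : ∀ U ∈ A, Adm n U) (p q : Fin (2*n)) (hpq : p ≠ q)
    (hcount : ((A.filter (fun U => U.2 p = q)).card : ℝ) ≠ (A.card : ℝ) / (2*(n:ℝ) - 1))
    (a : EuclideanSpace ℝ (Fin (2*n)))
    (ha : a = (Real.sqrt 2)⁻¹ •
      (EuclideanSpace.single p (1:ℝ) + EuclideanSpace.single q (1:ℝ))) :
    ((A.card : ℝ) / (2*(n:ℝ) - 1)) * (⟪a, EuclideanSpace.single p (1:ℝ)⟫ *
        ⟪a, EuclideanSpace.single q (1:ℝ)⟫) +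
      ∑ U ∈ A, ⟪Uact n U a, EuclideanSpace.single p (1:ℝ)⟫ *
        ⟪Uact n U a, EuclideanSpace.single q (1:ℝ)⟫ =
      (1/2) * ((A.card : ℝ) / (2*(n:ℝ) - 1) - (A.filter (fun U => U.2 p = q)).card) ∧
    ((A.card : ℝ) / (2*(n:ℝ) - 1)) * (⟪a, EuclideanSpace.single p (1:ℝ)⟫ *
        ⟪a, EuclideanSpace.single q (1:ℝ)⟫) +
      ∑ U ∈ A, ⟪Uact n U a, EuclideanSpace.single p (1:ℝ)⟫ *
        ⟪Uact n U a, EuclideanSpace.single q (1:ℝ)⟫ ≠ 0 ∧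
    ¬ (∀ x : EuclideanSpace ℝ (Fin (2*n)), ⟪x, a⟫ = 0 →
      x = ((A.card : ℝ) / (2*(n:ℝ) - 1))⁻¹ • ∑ U ∈ A, ⟪x, Uact n U a⟫ • Uact n U a) := by
  replace ha : a = pairUnitVector p q := ha
  subst ha
  have hvalue := mul_inner_add_sum_inner_Uact_pairUnitVector hA hpq ((A.card : ℝ) / (2*(n:ℝ) - 1))
  exact ⟨hvalue, hvalue ▸ mul_ne_zero one_half_pos.ne' (sub_ne_zero.2 hcount.symm),
    not_forall_inner_pairUnitVector_eq_zero_imp_eq_frame hA hpq hcount⟩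

theorem unbalanced_i_not_tight_frame (n : ℕ) (hn : 1 ≤ n)
    (A : Finset ((Fin (2*n) → ℤˣ) × (Fin (2*n) → Fin (2*n))))
    (hA : ∀ U ∈ A, Adm n U) (p q : Fin (2*n)) (hpq : p ≠ q)
    (hcount : ((A.filter (fun U => U.2 p = q)).card : ℝ) ≠ (A.card : ℝ) / (2*(n:ℝ) - 1))
    (a : EuclideanSpace ℝ (Fin (2*n)))
    (ha : a = (Real.sqrt 2)⁻¹ •
      (EuclideanSpace.single p (1:ℝ) + EuclideanSpace.single q (1:ℝ))) :
    ((A.card : ℝ) / (2*(n:ℝ) - 1)) * (⟪a, EuclideanSpace.single p (1:ℝ)⟫ *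
        ⟪a, EuclideanSpace.single q (1:ℝ)⟫) +
      ∑ U ∈ A, ⟪Uact n U a, EuclideanSpace.single p (1:ℝ)⟫ *
        ⟪Uact n U a, EuclideanSpace.single q (1:ℝ)⟫ =
      (1/2) * ((A.card : ℝ) / (2*(n:ℝ) - 1) - (A.filter (fun U => U.2 p = q)).card) ∧
    ((A.card : ℝ) / (2*(n:ℝ) - 1)) * (⟪a, EuclideanSpace.single p (1:ℝ)⟫ *
        ⟪a, EuclideanSpace.single q (1:ℝ)⟫) +
      ∑ U ∈ A, ⟪Uact n U a, EuclideanSpace.single p (1:ℝ)⟫ *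
        ⟪Uact n U a, EuclideanSpace.single q (1:ℝ)⟫ ≠ 0 ∧
    ¬ (∀ x : EuclideanSpace ℝ (Fin (2*n)), ⟪x, a⟫ = 0 →
      x = ((A.card : ℝ) / (2*(n:ℝ) - 1))⁻¹ • ∑ U ∈ A, ⟪x, Uact n U a⟫ • Uact n U a) :=
  unbalanced_i_not_tight_frame_general n A hA p q hpq hcount a ha
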